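/- For n ≥ 9 and 0 ≤ i ≤ n−6, the family ℱ_i of flags (A,B) of type {1,n−3} of [n] satisfying ([i] ⊆ B and B ⊆ [n−1]) or (min(A) ≤ i and [min(A)] ⊆ B) is an independent set (pairwise non-opposite), and for i = n−9 it has size C(n,4) + 42. -/

import Mathlib

open Finset

/-- The ground set `[n] = {1,…,n}`. -/
def Iv (n : ℕ) : Finset ℕ := Finset.Icc 1 n

/-- A flag of type `{a,b}` of `[n]`: a pair `(A,B)` with `A ⊆ B ⊆ [n]`, `|A| = a`, `|B| = b`. -/
def IsFlag (n a b : ℕ) (f : Finset ℕ × Finset ℕ) : Prop :=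
  f.1 ⊆ f.2 ∧ f.2 ⊆ Iv n ∧ f.1.card = a ∧ f.2.card = b

/-- Opposition of flags `(A₁,B₁)`, `(A₂,B₂)`: `B₁ ∪ B₂ = [n]`, `A₁ ∩ B₂ = ∅`, `A₂ ∩ B₁ = ∅`. -/
def OppFlag (n : ℕ) (f g : Finset ℕ × Finset ℕ) : Prop :=
  f.2 ∪ g.2 = Iv n ∧ f.1 ∩ g.2 = ∅ ∧ g.1 ∩ f.2 = ∅

/-- An independent (EKR) set of flags: pairwise non-opposite. -/
def Indep (n : ℕ) (F : Finset (Finset ℕ × Finset ℕ)) : Prop :=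
  ∀ f ∈ F, ∀ g ∈ F, ¬ OppFlag n f g

/-- The `ℱ`-weight of a `b`-set `B`: the number of flags in `ℱ` with second component `B`. -/
def weightB (F : Finset (Finset ℕ × Finset ℕ)) (B : Finset ℕ) : ℕ :=
  (F.filter (fun f => f.2 = B)).card

/-- The `ℱ`-weight of an `a`-set `A`: the number of flags in `ℱ` with first component `A`. -/
def weightA (F : Finset (Finset ℕ × Finset ℕ)) (A : Finset ℕ) : ℕ :=
  (F.filter (fun f => f.1 = A)).card

/-- A maximal independent set of flags of type `{a,b}`. -/
def MaximalIndep (n a b : ℕ) (F : Finset (Finset ℕ × Finset ℕ)) : Prop :=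
  (∀ f ∈ F, IsFlag n a b f) ∧ Indep n F ∧
    (∀ f, IsFlag n a b f → Indep n (insert f F) → f ∈ F)

instance (n a b : ℕ) : DecidablePred (IsFlag n a b) := fun f => by
  unfold IsFlag; infer_instance

instance (n : ℕ) (f g : Finset ℕ × Finset ℕ) : Decidable (OppFlag n f g) := by
  unfold OppFlag; infer_instance

/-- The finset of all flags of type `{a,b}` of `[n]`. -/
def allFlags (n a b : ℕ) : Finset (Finset ℕ × Finset ℕ) :=
  ((Iv n).powerset ×ˢ (Iv n).powerset).filter (IsFlag n a b)

/-- The family `ℱ_i(n,1,n−3)`: flags `(A,B)` of type `{1,n−3}` with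
`[i] ⊆ B ⊆ [n−1]`, or `min(A) ≤ i` and `[min(A)] ⊆ B` (as `|A| = 1`, the latter
is phrased via the unique element of `A`). -/
def Fi (n i : ℕ) : Finset (Finset ℕ × Finset ℕ) :=
  (allFlags n 1 (n - 3)).filter
    (fun f => (Iv i ⊆ f.2 ∧ f.2 ⊆ Iv (n - 1)) ∨ ∃ m ∈ f.1, m ≤ i ∧ Iv m ⊆ f.2)

/-!
A flag of type `{1, n-3}` is `({a}, B)` with `a ∈ B`, and `({a}, B)`, `({b}, B')` are opposite
iff `B ∪ B' = [n]`, `a ∉ B'` and `b ∉ B`. Two flags with `B, B' ⊆ [n-1]` both miss `n`; a flag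
with `[i] ⊆ B` contains every `b ≤ i`; and of two flags with `[a] ⊆ B`, `[b] ⊆ B'`, the smaller
of `a, b` lies in the other set. So `ℱ_i` is independent.

The flags of `ℱ_i` with `a ≤ i` are those with `[a] ⊆ B`: their number is
`∑_{a ≤ i} C(n-a, 3) = C(n,4) - C(n-i,4)`. The others have `[i] ⊆ B ⊆ [n-1]`, a choice of
`C(n-1-i, 2)` sets `B` (their complement in `[n-1]` lies above `i`), and `a ∈ B \ [i]`, a choice
among `n-3-i` points. For `i = n-9` this gives `C(n,4) - 126 + 28 · 6`.
-/

lemma mem_Iv {x n : ℕ} : x ∈ Iv n ↔ 1 ≤ x ∧ x ≤ n := by simp [Iv]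

lemma card_Iv (n : ℕ) : #(Iv n) = n := by simp [Iv]

lemma Iv_mono {m n : ℕ} (h : m ≤ n) : Iv m ⊆ Iv n := Icc_subset_Icc_right h

/-- Passing to complements in `S` turns supersets of `T` into subsets of `S \ T`. -/
lemma card_filter_superset_powersetCard {α : Type*} [DecidableEq α] {S T : Finset α}
    (hTS : T ⊆ S) {k : ℕ} (hk : k ≤ #S) :
    #{B ∈ powersetCard k S | T ⊆ B} = (#S - #T).choose (#S - k) := by
  rw [← card_sdiff_of_subset hTS, ← card_powersetCard]
  refine card_nbij' (S \ ·) (S \ ·) ?_ ?_ ?_ ?_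
  · intro B hB
    simp only [coe_filter, mem_powersetCard, Set.mem_ofPred_eq] at hB
    simp only [mem_coe, mem_powersetCard]
    exact ⟨sdiff_subset_sdiff le_rfl hB.2, by rw [card_sdiff_of_subset hB.1.1, hB.1.2]⟩
  · intro C hC
    simp only [mem_coe, mem_powersetCard] at hC
    simp only [coe_filter, mem_powersetCard, Set.mem_ofPred_eq]
    refine ⟨⟨sdiff_subset, ?_⟩, ?_⟩
    · rw [card_sdiff_of_subset (hC.1.trans sdiff_subset), hC.2]; omega
    · rw [subset_sdiff]; exact ⟨hTS, disjoint_of_subset_left hC.1 sdiff_disjoint |>.symm⟩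
  · intro B hB
    exact Finset.sdiff_sdiff_eq_self (mem_powersetCard.mp (mem_filter.mp hB).1).1
  · intro C hC
    exact Finset.sdiff_sdiff_eq_self ((mem_powersetCard.mp hC).1.trans sdiff_subset)

lemma sum_choose_sub_add_choose (n k : ℕ) {i : ℕ} (hi : i ≤ n) :
    ∑ a ∈ Icc 1 i, (n - a).choose k + (n - i).choose (k + 1) = n.choose (k + 1) := by
  induction i with
  | zero => simp
  | succ i ih =>
    have hsucc : n - i = n - (i + 1) + 1 := by omega
    rw [sum_Icc_succ_top (by omega), add_assoc, ← Nat.choose_succ_succ', ← hsucc,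
      ih (by omega)]

lemma mem_Fi_iff {n i : ℕ} {A B : Finset ℕ} :
    (A, B) ∈ Fi n i ↔ ∃ a, A = {a} ∧ a ∈ B ∧ B ⊆ Iv n ∧ #B = n - 3 ∧
      ((Iv i ⊆ B ∧ B ⊆ Iv (n - 1)) ∨ (a ≤ i ∧ Iv a ⊆ B)) := by
  simp only [Fi, allFlags, IsFlag, mem_filter, mem_product, mem_powerset, card_eq_one]
  constructor
  · rintro ⟨⟨-, hAB, hBn, ⟨a, rfl⟩, hB⟩, hcond⟩
    refine ⟨a, rfl, singleton_subset_iff.mp hAB, hBn, hB, ?_⟩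
    simpa using hcond
  · rintro ⟨a, rfl, haB, hBn, hB, hcond⟩
    have haB' : {a} ⊆ B := singleton_subset_iff.mpr haB
    exact ⟨⟨⟨haB'.trans hBn, hBn⟩, haB', hBn, ⟨a, rfl⟩, hB⟩, by simpa using hcond⟩

def FiLow (n i : ℕ) : Finset (Finset ℕ × Finset ℕ) :=
  ((Iv i).sigma fun a => {B ∈ powersetCard (n - 3) (Iv n) | Iv a ⊆ B}).image
    fun p => ({p.1}, p.2)

def FiHigh (n i : ℕ) : Finset (Finset ℕ × Finset ℕ) :=
  ({B ∈ powersetCard (n - 3) (Iv (n - 1)) | Iv i ⊆ B}.sigma fun B => B \ Iv i).image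
    fun p => ({p.2}, p.1)

lemma Fi_eq_union (n i : ℕ) : Fi n i = FiLow n i ∪ FiHigh n i := by
  ext ⟨A, B⟩
  simp only [mem_Fi_iff, FiLow, FiHigh, mem_union, mem_image, mem_sigma, mem_filter,
    mem_powersetCard, Sigma.exists, Prod.ext_iff, mem_sdiff, mem_Iv]
  constructor
  · rintro ⟨a, rfl, haB, hBn, hB, ⟨hiB, hBn'⟩ | ⟨hai, haB'⟩⟩
    · have ha1 : 1 ≤ a := (mem_Iv.mp (hBn haB)).1
      by_cases hai : a ≤ i
      · exact Or.inl ⟨a, B, ⟨⟨ha1, hai⟩, ⟨hBn, hB⟩, (Iv_mono hai).trans hiB⟩, rfl, rfl⟩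
      · exact Or.inr ⟨B, a, ⟨⟨⟨hBn', hB⟩, hiB⟩, haB, by omega⟩, rfl, rfl⟩
    · exact Or.inl ⟨a, B, ⟨⟨(mem_Iv.mp (hBn haB)).1, hai⟩, ⟨hBn, hB⟩, haB'⟩, rfl, rfl⟩
  · rintro (⟨a, B, ⟨⟨ha1, hai⟩, ⟨hBn, hB⟩, haB⟩, rfl, rfl⟩ |
      ⟨B, a, ⟨⟨⟨hBn, hB⟩, hiB⟩, haB, -⟩, rfl, rfl⟩)
    · exact ⟨a, rfl, haB (mem_Iv.mpr ⟨ha1, le_rfl⟩), hBn, hB, Or.inr ⟨hai, haB⟩⟩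
    · exact ⟨a, rfl, haB, hBn.trans (Iv_mono (Nat.sub_le n 1)), hB, Or.inl ⟨hiB, hBn⟩⟩

lemma disjoint_FiLow_FiHigh (n i : ℕ) : Disjoint (FiLow n i) (FiHigh n i) := by
  simp only [FiLow, FiHigh, disjoint_left, mem_image, mem_sigma, mem_sdiff, Sigma.exists,
    Prod.ext_iff, not_exists, not_and]
  rintro f ⟨a, B, ⟨hai, -⟩, hA, -⟩ B' a' ⟨-, -, ha'i⟩ hA' -
  exact ha'i (singleton_injective (hA'.trans hA.symm) ▸ hai)

lemma card_FiLow {n i : ℕ} (hi : i + 3 ≤ n) :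
    #(FiLow n i) = ∑ a ∈ Icc 1 i, (n - a).choose 3 := by
  rw [FiLow, card_image_of_injective _ fun p q h => ?_, card_sigma]
  · refine sum_congr rfl fun a ha => ?_
    have hai : a ≤ i := (mem_Iv.mp ha).2
    rw [card_filter_superset_powersetCard (Iv_mono (by omega)) (by rw [card_Iv]; omega),
      card_Iv, card_Iv, Nat.sub_sub_self (by omega)]
  · simp only [Prod.ext_iff, singleton_inj] at h
    exact Sigma.ext h.1 (heq_of_eq h.2)

lemma card_FiHigh {n i : ℕ} (hi : i + 3 ≤ n) :
    #(FiHigh n i) = (n - 1 - i).choose 2 * (n - 3 - i) := by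
  rw [FiHigh, card_image_of_injective _ fun p q h => ?_, card_sigma]
  · rw [sum_congr rfl fun B hB => ?_, sum_const, smul_eq_mul,
      card_filter_superset_powersetCard (Iv_mono (by omega)) (by rw [card_Iv]; omega),
      card_Iv, card_Iv]
    · congr 2; omega
    · obtain ⟨⟨-, hB⟩, hiB⟩ := by simpa only [mem_filter, mem_powersetCard] using hB
      rw [card_sdiff_of_subset hiB, hB, card_Iv]
  · simp only [Prod.ext_iff, singleton_inj] at h
    exact Sigma.ext h.2 (heq_of_eq h.1)

lemma card_Fi_add_choose {n i : ℕ} (hi : i + 3 ≤ n) :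
    #(Fi n i) + (n - i).choose 4 = n.choose 4 + (n - 1 - i).choose 2 * (n - 3 - i) := by
  rw [Fi_eq_union, card_union_of_disjoint (disjoint_FiLow_FiHigh n i), card_FiLow hi,
    card_FiHigh hi, add_right_comm, sum_choose_sub_add_choose n 3 (by omega)]

lemma mem_of_mem_Fi {n i a b : ℕ} {B B' : Finset ℕ} (hf : ({a}, B) ∈ Fi n i)
    (hb : b ∈ Iv i) (hbB' : Iv b ⊆ B') (haB' : a ∉ B') : b ∈ B := by
  obtain ⟨a', ha', haB, hBn, -, ⟨hiB, -⟩ | ⟨-, haB''⟩⟩ := mem_Fi_iff.mp hf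
  · exact hiB hb
  · obtain rfl := singleton_inj.mp ha'
    have hba : b ≤ a := by
      by_contra! hab
      exact haB' (hbB' (mem_Iv.mpr ⟨(mem_Iv.mp (hBn haB)).1, hab.le⟩))
    exact haB'' (mem_Iv.mpr ⟨(mem_Iv.mp hb).1, hba⟩)

lemma indep_Fi {n : ℕ} (hn : 1 ≤ n) (i : ℕ) : Indep n (Fi n i) := by
  rintro ⟨A, B⟩ hf ⟨A', B'⟩ hg ⟨hU, hAB', hA'B⟩
  obtain ⟨a, rfl, haB, hBn, -, hf'⟩ := mem_Fi_iff.mp hf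
  obtain ⟨b, rfl, hbB', hB'n, -, hg'⟩ := mem_Fi_iff.mp hg
  rw [← disjoint_iff_inter_eq_empty, disjoint_singleton_left] at hAB' hA'B
  rcases hg' with ⟨-, hB'⟩ | ⟨hbi, hIvB'⟩
  · rcases hf' with ⟨-, hB⟩ | ⟨hai, hIvB⟩
    · have hnU : n ∈ B ∪ B' := hU ▸ mem_Iv.mpr ⟨hn, le_rfl⟩
      rcases mem_union.mp hnU with h | h
      · have := (mem_Iv.mp (hB h)).2; omega
      · have := (mem_Iv.mp (hB' h)).2; omega
    · exact hAB' (mem_of_mem_Fi hg (mem_Iv.mpr ⟨(mem_Iv.mp (hBn haB)).1, hai⟩) hIvB hA'B)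
  · exact hA'B (mem_of_mem_Fi hf (mem_Iv.mpr ⟨(mem_Iv.mp (hB'n hbB')).1, hbi⟩) hIvB' hAB')

/-- for `n ≥ 9` the families `ℱ_i` with `0 ≤ i ≤ n−6` are independent
sets, and `ℱ_{n−9}` has size `C(n,4) + 42`. -/
theorem stmt_18 (n : ℕ) (hn : 9 ≤ n) :
    (∀ i, i ≤ n - 6 → Indep n (Fi n i)) ∧
      (Fi n (n - 9)).card = Nat.choose n 4 + 42 := by
  refine ⟨fun i _ => indep_Fi (by omega) i, ?_⟩
  have hcard := card_Fi_add_choose (n := n) (i := n - 9) (by omega)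
  rw [show n - (n - 9) = 9 by omega, show n - 1 - (n - 9) = 8 by omega,
    show n - 3 - (n - 9) = 6 by omega] at hcard
  have h94 : (9 : ℕ).choose 4 = 126 := by decide
  have h82 : (8 : ℕ).choose 2 = 28 := by decide
  omega
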